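/- arXiv:2304.13533 — 3 statements merged into one kernel-verified Lean document; each statement's English description precedes it below -/
import Mathlib

section
/- Let $F \in H^1(\mathbb{R}^d)$ be even with respect to a coordinate hyperplane, i.e. $F = F\circ\sigma_e$ for a coordinate unit vector $e$. Then $F\,\mathbf{1}_{\{x: x\cdot e > 0\}} \in H^1(\mathbb{R}^d)$ and $\|F\,\mathbf{1}_{\{x: x\cdot e > 0\}}\|_{H^1(\mathbb{R}^d)} \le C\,\|F\|_{H^1(\mathbb{R}^d)}$ for a constant $C$ depending only on $d$. -/
open MeasureTheory Filter Topology ENNReal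

noncomputable section

/-- An open cube in `ℝ^d` with sides parallel to the coordinate axes. -/
structure Cube (d : ℕ) where
  corner : Fin d → ℝ
  side : ℝ
  side_pos : 0 < side

namespace Cube

variable {d : ℕ}

def toSet (Q : Cube d) : Set (Fin d → ℝ) :=
  {x | ∀ i, Q.corner i < x i ∧ x i < Q.corner i + Q.side}

/-- the volume `|Q| = l(Q)^d` -/
def vol (Q : Cube d) : ℝ := Q.side ^ d

/-- the concentric double `2Q` -/
def double (Q : Cube d) : Cube d :=
  ⟨fun i => Q.corner i - Q.side / 2, 2 * Q.side, by have := Q.side_pos; linarith⟩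

end Cube

/-- reflection in the coordinate hyperplane orthogonal to `e_j` -/
def reflCoord {d : ℕ} (j : Fin d) (x : Fin d → ℝ) : Fin d → ℝ :=
  Function.update x j (-(x j))

/-- the open half-space `{x : x·e_j > 0}` -/
def upperHS {d : ℕ} (j : Fin d) : Set (Fin d → ℝ) := {x | 0 < x j}

/-- classical `H¹`-atom supported in the cube `Q` -/
def IsAtomIn {d : ℕ} (a : (Fin d → ℝ) → ℂ) (Q : Cube d) : Prop :=
  MemLp a 2 volume ∧ (∀ x, x ∉ Q.toSet → a x = 0) ∧ (∫ x, a x = 0) ∧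
    eLpNorm a 2 volume ≤ ENNReal.ofReal (Real.sqrt Q.vol)⁻¹

def IsClassicalAtom {d : ℕ} (a : (Fin d → ℝ) → ℂ) : Prop := ∃ Q, IsAtomIn a Q

/-- an atomic decomposition of `F` (convergence of partial sums in `L¹`) -/
def H1Decomp {d : ℕ} (F : (Fin d → ℝ) → ℂ) (a : ℕ → (Fin d → ℝ) → ℂ) (lam : ℕ → ℝ) : Prop :=
  (∀ i, IsClassicalAtom (a i)) ∧ Summable lam ∧
    Tendsto (fun n => ∫ x, ‖(∑ i ∈ Finset.range n, (lam i : ℂ) * a i x) - F x‖) atTop (𝓝 0)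

/-- membership in the real Hardy space `H¹(ℝ^d)` via atomic decompositions -/
def MemH1 {d : ℕ} (F : (Fin d → ℝ) → ℂ) : Prop := ∃ a lam, H1Decomp F a lam

/-- the atomic `H¹` norm -/
def H1Norm {d : ℕ} (F : (Fin d → ℝ) → ℂ) : ℝ :=
  sInf {r | ∃ a lam, H1Decomp F a lam ∧ r = ∑' i, |lam i|}

/-- mean oscillation `inf_c |Q|⁻¹ ∫_Q |F - c|` -/
def osc {d : ℕ} (F : (Fin d → ℝ) → ℂ) (Q : Cube d) : ℝ :=
  sInf {r | ∃ c : ℂ, r = (Q.vol)⁻¹ * ∫ x in Q.toSet, ‖F x - c‖}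

/-- mean value of `|F|` over `Q` -/
def mvQ {d : ℕ} (F : (Fin d → ℝ) → ℂ) (Q : Cube d) : ℝ :=
  (Q.vol)⁻¹ * ∫ x in Q.toSet, ‖F x‖

/-- the mean `F_Q` -/
def meanOn {d : ℕ} (F : (Fin d → ℝ) → ℂ) (Q : Cube d) : ℂ :=
  (Q.vol : ℂ)⁻¹ * ∫ x in Q.toSet, F x

/-- `|Q|⁻¹ ∫_Q |F - F_Q|` -/
def oscMean {d : ℕ} (F : (Fin d → ℝ) → ℂ) (Q : Cube d) : ℝ :=
  (Q.vol)⁻¹ * ∫ x in Q.toSet, ‖F x - meanOn F Q‖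

/-- the `BMO` `*`-seminorm `sup_Q inf_c |Q|⁻¹∫_Q|F-c|` as an `ℝ≥0∞`-valued supremum -/
def BMOStar {d : ℕ} (F : (Fin d → ℝ) → ℂ) : ℝ≥0∞ :=
  ⨆ Q : Cube d, ENNReal.ofReal (osc F Q)

/-- the `BMO` norm `sup_Q |Q|⁻¹∫_Q|F-F_Q|` as an `ℝ≥0∞`-valued supremum -/
def BMONorm {d : ℕ} (F : (Fin d → ℝ) → ℂ) : ℝ≥0∞ :=
  ⨆ Q : Cube d, ENNReal.ofReal (oscMean F Q)

/-- the real-valued `BMO` norm (for functions known to be in `BMO`) -/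
def bmoSupMean {d : ℕ} (F : (Fin d → ℝ) → ℂ) : ℝ :=
  sSup {r | ∃ Q : Cube d, r = oscMean F Q}

/-- the local `bmo` `*`-norm with breaking point `a`:
`sup_{l(Q)<a} inf_c |Q|⁻¹∫_Q|F-c| + sup_{l(Q)≥a} |Q|⁻¹∫_Q|F|` -/
def bmoStarA {d : ℕ} (a : ℝ) (F : (Fin d → ℝ) → ℂ) : ℝ≥0∞ :=
  (⨆ Q : {Q : Cube d // Q.side < a}, ENNReal.ofReal (osc F Q.1)) +
  (⨆ Q : {Q : Cube d // a ≤ Q.side}, ENNReal.ofReal (mvQ F Q.1))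

/-- the Weyl chamber `ℝ^{d-k} × (0,∞)^k` -/
def chamber (d k : ℕ) : Set (Fin d → ℝ) :=
  {x | ∀ i : Fin d, d - k ≤ (i : ℕ) → 0 < x i}

/-- the group `{±1}^k` acting by sign changes on the last `k` coordinates -/
def signSet (d k : ℕ) : Finset (Fin d → Bool) :=
  Finset.univ.filter (fun s => ∀ i : Fin d, (i : ℕ) < d - k → s i = false)

def signAct {d : ℕ} (s : Fin d → Bool) (x : Fin d → ℝ) : Fin d → ℝ :=
  fun i => if s i then -x i else x i

/-- `ε^η = ∏ εᵢ^{ηᵢ}` -/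
def signChar {d : ℕ} (s η : Fin d → Bool) : ℝ :=
  ∏ i, if s i && η i then (-1 : ℝ) else 1

/-- the `η`-extension operator for the orthogonal root system `R_k` -/
def etaExt (d k : ℕ) (η : Fin d → Bool) (a : (Fin d → ℝ) → ℂ) : (Fin d → ℝ) → ℂ :=
  fun x => ∑ s ∈ signSet d k, ((signChar s η : ℝ) : ℂ) * a (signAct s x)

/-- `Reta d k η true  = ℝ^{η,1}_+` and `Reta d k η false = ℝ^{η,0}_+` -/
def Reta (d k : ℕ) (η : Fin d → Bool) (v : Bool) : Set (Fin d → ℝ) :=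
  {x | ∀ i : Fin d, d - k ≤ (i : ℕ) → η i = v → 0 < x i}

section Aux

variable {d : ℕ} (j : Fin d)

theorem reflCoord_apply (x : Fin d → ℝ) (i : Fin d) :
    reflCoord j x i = if i = j then -(x j) else x i := by
  simp [reflCoord, Function.update_apply]

theorem reflCoord_invol (x : Fin d → ℝ) : reflCoord j (reflCoord j x) = x := by
  funext i
  simp [reflCoord_apply]
  by_cases h : i = j <;> simp [h]

theorem reflCoord_mp : MeasurePreserving (reflCoord j) volume volume := by
  have h : MeasurePreserving (fun (a : Fin d → ℝ) i => (if i = j then Neg.neg else id) (a i))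
      (Measure.pi fun _ => volume) (Measure.pi fun _ => volume) := by
    refine MeasureTheory.measurePreserving_pi _ _ (fun i => ?_)
    by_cases h : i = j <;> simp [h]
    · exact Measure.measurePreserving_neg _
    · exact MeasurePreserving.id _
  have he : (fun (a : Fin d → ℝ) i => (if i = j then Neg.neg else id) (a i)) = reflCoord j := by
    funext a i
    by_cases h : i = j <;> simp [reflCoord_apply, h]
  rw [he] at h
  simpa [MeasureTheory.volume_pi] using h

def reflME : (Fin d → ℝ) ≃ᵐ (Fin d → ℝ) where
  toFun := reflCoord j
  invFun := reflCoord j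
  left_inv := reflCoord_invol j
  right_inv := reflCoord_invol j
  measurable_toFun := (reflCoord_mp j).measurable
  measurable_invFun := (reflCoord_mp j).measurable

theorem reflCoord_emb : MeasurableEmbedding (reflCoord j) :=
  (reflME j).measurableEmbedding

theorem hyperplane_null : volume {x : Fin d → ℝ | x j = 0} = 0 := by
  have h : {x : Fin d → ℝ | x j = 0} =
      Set.pi Set.univ (fun i => if i = j then ({0} : Set ℝ) else Set.univ) := by
    ext x
    simp only [Set.mem_setOf_eq, Set.mem_pi, Set.mem_univ, forall_true_left]
    constructor
    · intro hx i; by_cases h : i = j <;> simp [h, hx]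
    · intro hx; have := hx j; simpa using this
  rw [h, volume_pi, Measure.pi_pi]
  exact Finset.prod_eq_zero (Finset.mem_univ j) (by simp)

end Aux
section Aux2

variable {d : ℕ}

theorem Cube.toSet_eq (Q : Cube d) :
    Q.toSet = Set.pi Set.univ (fun i => Set.Ioo (Q.corner i) (Q.corner i + Q.side)) := by
  ext x; simp [Cube.toSet, Set.mem_pi, Set.mem_Ioo]

theorem Cube.measurableSet_toSet (Q : Cube d) : MeasurableSet Q.toSet := by
  rw [Cube.toSet_eq]
  exact MeasurableSet.univ_pi fun i => measurableSet_Ioo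

theorem Cube.vol_pos (Q : Cube d) : 0 < Q.vol := pow_pos Q.side_pos d

theorem Cube.volume_toSet (Q : Cube d) : volume Q.toSet = ENNReal.ofReal Q.vol := by
  rw [Cube.toSet_eq, volume_pi, Measure.pi_pi]
  simp only [Real.volume_Ioo, add_sub_cancel_left]
  rw [Finset.prod_const, Cube.vol, ← ENNReal.ofReal_pow Q.side_pos.le]
  simp

theorem Cube.volume_toSet_lt_top (Q : Cube d) : volume Q.toSet < ⊤ := by
  rw [Cube.volume_toSet]; exact ENNReal.ofReal_lt_top

theorem IsAtomIn.integrable {a : (Fin d → ℝ) → ℂ} {Q : Cube d} (h : IsAtomIn a Q) :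
    Integrable a volume := by
  rw [← memLp_one_iff_integrable]
  exact h.1.mono_exponent_of_measure_support_ne_top h.2.1
    Q.volume_toSet_lt_top.ne (by norm_num)

theorem measurableSet_upper (j : Fin d) : MeasurableSet {x : Fin d → ℝ | 0 < x j} :=
  measurableSet_lt measurable_const (measurable_pi_apply j)

end Aux2
section Eop

variable {d : ℕ} (j : Fin d)

/-- The even-restriction operator. -/
def Eop (a : (Fin d → ℝ) → ℂ) : (Fin d → ℝ) → ℂ :=
  fun x => if 0 < x j then (a x + a (reflCoord j x)) / 2 else 0

theorem Eop_eq_indicator (a : (Fin d → ℝ) → ℂ) :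
    Eop j a = Set.indicator {x : Fin d → ℝ | 0 < x j}
      (fun x => (a x + a (reflCoord j x)) / 2) := by
  funext x
  simp [Eop, Set.indicator_apply]

variable {j}

theorem aesm_comp_refl {a : (Fin d → ℝ) → ℂ} (ha : AEStronglyMeasurable a volume) :
    AEStronglyMeasurable (fun x => a (reflCoord j x)) volume :=
  ha.comp_quasiMeasurePreserving (reflCoord_mp j).quasiMeasurePreserving

theorem aesm_Eop {a : (Fin d → ℝ) → ℂ} (ha : AEStronglyMeasurable a volume) :
    AEStronglyMeasurable (Eop j a) volume := by
  rw [Eop_eq_indicator]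
  have h : AEStronglyMeasurable (fun x => (a x + a (reflCoord j x)) / 2) volume := by
    have h2 := ((ha.add (aesm_comp_refl (j:=j) ha)).const_smul ((2:ℂ)⁻¹))
    refine h2.congr (Filter.Eventually.of_forall fun x => ?_)
    simp [smul_eq_mul, div_eq_inv_mul]
  exact h.indicator (measurableSet_upper j)

theorem eLpNorm_comp_refl (a : (Fin d → ℝ) → ℂ) (ha : AEStronglyMeasurable a volume)
    (p : ℝ≥0∞) : eLpNorm (fun x => a (reflCoord j x)) p volume = eLpNorm a p volume :=
  eLpNorm_comp_measurePreserving ha (reflCoord_mp j)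

theorem integrable_comp_refl {a : (Fin d → ℝ) → ℂ} (ha : Integrable a volume) :
    Integrable (fun x => a (reflCoord j x)) volume :=
  ((reflCoord_mp j).integrable_comp_emb (reflCoord_emb j)).mpr ha

theorem eLpNorm_Eop_le {a : (Fin d → ℝ) → ℂ} (ha : AEStronglyMeasurable a volume)
    {p : ℝ≥0∞} (hp : 1 ≤ p) : eLpNorm (Eop j a) p volume ≤ eLpNorm a p volume := by
  have h1 : eLpNorm (Eop j a) p volume ≤
      eLpNorm ((2:ℂ)⁻¹ • (a + fun x => a (reflCoord j x))) p volume := by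
    refine eLpNorm_mono fun x => ?_
    simp only [Eop, Pi.smul_apply, Pi.add_apply, smul_eq_mul]
    by_cases hx : 0 < x j
    · simp only [hx, if_true]
      rw [div_eq_inv_mul]
    · simp [hx]
  refine h1.trans ?_
  rw [eLpNorm_const_smul]
  have h2 : eLpNorm (a + fun x => a (reflCoord j x)) p volume ≤
      eLpNorm a p volume + eLpNorm (fun x => a (reflCoord j x)) p volume :=
    eLpNorm_add_le ha (aesm_comp_refl ha) hp
  rw [eLpNorm_comp_refl a ha] at h2
  calc (‖(2:ℂ)⁻¹‖₊ : ℝ≥0∞) * eLpNorm (a + fun x => a (reflCoord j x)) p volume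
      ≤ (‖(2:ℂ)⁻¹‖₊ : ℝ≥0∞) * (eLpNorm a p volume + eLpNorm a p volume) :=
        mul_le_mul_right h2 _
    _ = eLpNorm a p volume := by
        rw [← two_mul]
        have : (‖(2:ℂ)⁻¹‖₊ : ℝ≥0∞) = 2⁻¹ := by
          rw [nnnorm_inv]
          simp
        rw [this, ← mul_assoc, ENNReal.inv_mul_cancel (by norm_num) (by norm_num), one_mul]

end Eop
section EopInt

variable {d : ℕ} {j : Fin d}

theorem image_upper : reflCoord j '' {x : Fin d → ℝ | 0 < x j} = {x : Fin d → ℝ | x j < 0} := by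
  ext x
  constructor
  · rintro ⟨y, hy, rfl⟩
    simp only [Set.mem_setOf_eq] at hy ⊢
    rw [reflCoord_apply]
    simpa using hy
  · intro hx
    refine ⟨reflCoord j x, ?_, reflCoord_invol j x⟩
    simp only [Set.mem_setOf_eq] at hx ⊢
    rw [reflCoord_apply]
    simpa using hx

theorem union_halves_ae :
    (({x : Fin d → ℝ | 0 < x j} ∪ {x : Fin d → ℝ | x j < 0} : Set (Fin d → ℝ)) : Set (Fin d → ℝ))
      =ᵐ[volume] (Set.univ : Set (Fin d → ℝ)) := by
  rw [MeasureTheory.ae_eq_univ]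
  have h : ({x : Fin d → ℝ | 0 < x j} ∪ {x : Fin d → ℝ | x j < 0})ᶜ
      = {x : Fin d → ℝ | x j = 0} := by
    ext x
    simp only [Set.mem_compl_iff, Set.mem_union, Set.mem_setOf_eq, not_or, not_lt]
    constructor
    · rintro ⟨h1, h2⟩; linarith
    · intro h; constructor <;> linarith [h.le, h.ge]
  rw [h]
  exact hyperplane_null j

theorem integral_Eop {a : (Fin d → ℝ) → ℂ} (ha : Integrable a volume) :
    ∫ x, Eop j a x = (2:ℂ)⁻¹ * ∫ x, a x := by
  have haσ : Integrable (fun x => a (reflCoord j x)) volume := integrable_comp_refl ha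
  have hH : MeasurableSet {x : Fin d → ℝ | 0 < x j} := measurableSet_upper j
  have hL : MeasurableSet {x : Fin d → ℝ | x j < 0} :=
    measurableSet_lt (measurable_pi_apply j) measurable_const
  have e1 : ∫ x, Eop j a x
      = ∫ x in {x : Fin d → ℝ | 0 < x j}, (a x + a (reflCoord j x)) / 2 := by
    rw [Eop_eq_indicator, MeasureTheory.integral_indicator hH]
  have e2 : ∫ x in {x : Fin d → ℝ | 0 < x j}, (a x + a (reflCoord j x)) / 2
      = (2:ℂ)⁻¹ * ((∫ x in {x : Fin d → ℝ | 0 < x j}, a x)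
          + ∫ x in {x : Fin d → ℝ | 0 < x j}, a (reflCoord j x)) := by
    calc ∫ x in {x : Fin d → ℝ | 0 < x j}, (a x + a (reflCoord j x)) / 2
        = ∫ x in {x : Fin d → ℝ | 0 < x j}, (2:ℂ)⁻¹ * (a x + a (reflCoord j x)) := by
          simp_rw [div_eq_inv_mul]
      _ = (2:ℂ)⁻¹ * ∫ x in {x : Fin d → ℝ | 0 < x j}, (a x + a (reflCoord j x)) :=
          MeasureTheory.integral_const_mul _ _
      _ = _ := by
          rw [MeasureTheory.integral_add (ha.integrableOn) (haσ.integrableOn)]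
  have e3 : ∫ x in {x : Fin d → ℝ | 0 < x j}, a (reflCoord j x)
      = ∫ x in {x : Fin d → ℝ | x j < 0}, a x := by
    rw [← image_upper]
    exact ((reflCoord_mp j).setIntegral_image_emb (reflCoord_emb j) a _).symm
  have e4 : (∫ x in {x : Fin d → ℝ | 0 < x j}, a x)
      + ∫ x in {x : Fin d → ℝ | x j < 0}, a x = ∫ x, a x := by
    rw [← MeasureTheory.setIntegral_union ?_ hL ha.integrableOn ha.integrableOn]
    · rw [MeasureTheory.setIntegral_congr_set union_halves_ae, MeasureTheory.setIntegral_univ]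
    · rw [Set.disjoint_left]
      intro x h1 h2
      simp only [Set.mem_setOf_eq] at h1 h2
      linarith
  rw [e1, e2, e3, e4]

end EopInt
section Atom

variable {d : ℕ}

/-- the constant `2^{d/2}` -/
def kap (d : ℕ) : ℝ := Real.sqrt (2 ^ d)

theorem kap_pos : 0 < kap d := Real.sqrt_pos.mpr (by positivity)

theorem one_le_kap : 1 ≤ kap d := by
  rw [kap, show (1:ℝ) = Real.sqrt 1 by simp]
  exact Real.sqrt_le_sqrt (one_le_pow₀ (by norm_num))

theorem eLpNorm_cmul (c : ℝ) (f : (Fin d → ℝ) → ℂ) (p : ℝ≥0∞) :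
    eLpNorm (fun x => (c : ℂ) * f x) p volume = ENNReal.ofReal |c| * eLpNorm f p volume := by
  have : (fun x => (c : ℂ) * f x) = (c : ℂ) • f := by
    funext x; simp [smul_eq_mul]
  rw [this, eLpNorm_const_smul]
  congr 1
  rw [← ofReal_norm, Complex.norm_real, Real.norm_eq_abs]

theorem atom_Eop {a : (Fin d → ℝ) → ℂ} {Q : Cube d} (j : Fin d) (h : IsAtomIn a Q) :
    IsClassicalAtom (fun x => ((kap d)⁻¹ : ℝ) * Eop j a x) := by
  obtain ⟨hmem, hsupp, hint, hnorm⟩ := h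
  -- choose the cube
  obtain ⟨Q', hsupp', hvol⟩ :
      ∃ Q' : Cube d, (∀ x, x ∉ Q'.toSet → Eop j a x = 0) ∧
        Real.sqrt Q'.vol ≤ kap d * Real.sqrt Q.vol := by
    by_cases h0 : 0 ≤ Q.corner j
    · refine ⟨Q, fun x hx => ?_, le_mul_of_one_le_left (Real.sqrt_nonneg _) one_le_kap⟩
      unfold Eop
      by_cases hxj : 0 < x j
      · rw [if_pos hxj]
        have h1 : a x = 0 := hsupp x hx
        have h2 : a (reflCoord j x) = 0 := by
          refine hsupp _ fun hc => ?_
          have := (hc j).1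
          rw [reflCoord_apply, if_pos rfl] at this
          linarith
        simp [h1, h2]
      · rw [if_neg hxj]
    · push_neg at h0
      by_cases h1 : Q.corner j + Q.side ≤ 0
      · refine ⟨⟨Function.update Q.corner j (-(Q.corner j + Q.side)), Q.side, Q.side_pos⟩,
          fun x hx => ?_, ?_⟩
        · unfold Eop
          by_cases hxj : 0 < x j
          · rw [if_pos hxj]
            have ha1 : a x = 0 := by
              refine hsupp x fun hc => ?_
              have := (hc j).2
              linarith
            have ha2 : a (reflCoord j x) = 0 := by
              refine hsupp _ fun hc => ?_
              apply hx
              intro i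
              rcases eq_or_ne i j with rfl | hij
              · have := hc i
                rw [reflCoord_apply, if_pos rfl] at this
                simp only [Function.update_self]
                constructor <;> [linarith [this.2]; linarith [this.1]]
              · have := hc i
                rw [reflCoord_apply, if_neg hij] at this
                simpa [Function.update_of_ne hij] using this
            simp [ha1, ha2]
          · rw [if_neg hxj]
        · have : Cube.vol ⟨Function.update Q.corner j (-(Q.corner j + Q.side)), Q.side,
              Q.side_pos⟩ = Q.vol := rfl
          rw [this]
          exact le_mul_of_one_le_left (Real.sqrt_nonneg _) one_le_kap
      · push_neg at h1
        have hside := Q.side_pos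
        refine ⟨⟨fun i => if i = j then -Q.side else Q.corner i - Q.side / 2, 2 * Q.side,
            by linarith⟩, fun x hx => ?_, ?_⟩
        · unfold Eop
          by_cases hxj : 0 < x j
          · rw [if_pos hxj]
            have ha1 : a x = 0 := by
              refine hsupp x fun hc => ?_
              apply hx
              intro i
              simp only
              rcases eq_or_ne i j with rfl | hij
              · rw [if_pos rfl]
                have := hc i
                constructor <;> [linarith [this.1]; linarith [this.2]]
              · rw [if_neg hij]
                have := hc i
                constructor <;> [linarith [this.1]; linarith [this.2]]
            have ha2 : a (reflCoord j x) = 0 := by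
              refine hsupp _ fun hc => ?_
              apply hx
              intro i
              simp only
              rcases eq_or_ne i j with rfl | hij
              · rw [if_pos rfl]
                have := hc i
                rw [reflCoord_apply, if_pos rfl] at this
                constructor <;> [linarith [this.2]; linarith [this.1]]
              · rw [if_neg hij]
                have := hc i
                rw [reflCoord_apply, if_neg hij] at this
                constructor <;> [linarith [this.1]; linarith [this.2]]
            simp [ha1, ha2]
          · rw [if_neg hxj]
        · have hv : Cube.vol ⟨fun i => if i = j then -Q.side else Q.corner i - Q.side / 2,
              2 * Q.side, by linarith⟩ = 2 ^ d * Q.vol := by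
            simp [Cube.vol, mul_pow]
          rw [hv, Real.sqrt_mul (by positivity)]
          exact le_of_eq rfl
  -- assemble the atom
  have haesm := hmem.1
  have hmm : MemLp (Eop j a) 2 volume :=
    ⟨aesm_Eop haesm, lt_of_le_of_lt (eLpNorm_Eop_le haesm one_le_two) hmem.2⟩
  refine ⟨Q', ?_, fun x hx => by simp only [hsupp' x hx, mul_zero], ?_, ?_⟩
  · exact hmm.const_mul _
  · have hintEop : ∫ x, Eop j a x = 0 := by
      rw [integral_Eop (IsAtomIn.integrable ⟨hmem, hsupp, hint, hnorm⟩), hint, mul_zero]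
    rw [MeasureTheory.integral_const_mul, hintEop, mul_zero]
  · rw [eLpNorm_cmul]
    have hb : eLpNorm (Eop j a) 2 volume ≤ ENNReal.ofReal (Real.sqrt Q.vol)⁻¹ :=
      (eLpNorm_Eop_le haesm one_le_two).trans hnorm
    calc ENNReal.ofReal |(kap d)⁻¹| * eLpNorm (Eop j a) 2 volume
        ≤ ENNReal.ofReal (kap d)⁻¹ * ENNReal.ofReal (Real.sqrt Q.vol)⁻¹ := by
          rw [abs_of_nonneg (inv_nonneg.mpr kap_pos.le)]
          exact mul_le_mul_right hb _
      _ ≤ ENNReal.ofReal (Real.sqrt Q'.vol)⁻¹ := by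
          rw [← ENNReal.ofReal_mul (inv_nonneg.mpr kap_pos.le)]
          refine ENNReal.ofReal_le_ofReal ?_
          rw [← mul_inv]
          refine inv_anti₀ (Real.sqrt_pos.mpr Q'.vol_pos) hvol

end Atom
section Contract

variable {d : ℕ} {j : Fin d}

theorem Eop_sum {ι : Type*} (s : Finset ι) (f : ι → (Fin d → ℝ) → ℂ) (x : Fin d → ℝ) :
    Eop j (fun y => ∑ i ∈ s, f i y) x = ∑ i ∈ s, Eop j (f i) x := by
  unfold Eop
  by_cases hx : 0 < x j
  · simp only [hx, if_true]
    rw [← Finset.sum_add_distrib, Finset.sum_div]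
  · simp [hx]

theorem Eop_cmul (c : ℂ) (g : (Fin d → ℝ) → ℂ) (x : Fin d → ℝ) :
    Eop j (fun y => c * g y) x = c * Eop j g x := by
  unfold Eop
  by_cases hx : 0 < x j
  · simp only [hx, if_true]
    ring
  · simp [hx]

theorem Eop_sub (f g : (Fin d → ℝ) → ℂ) (x : Fin d → ℝ) :
    Eop j (fun y => f y - g y) x = Eop j f x - Eop j g x := by
  unfold Eop
  by_cases hx : 0 < x j
  · simp only [hx, if_true]
    ring
  · simp [hx]

theorem Eop_even {F : (Fin d → ℝ) → ℂ} (heven : ∀ x, F (reflCoord j x) = F x) :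
    Eop j F = fun x => if 0 < x j then F x else 0 := by
  funext x
  unfold Eop
  by_cases hx : 0 < x j
  · simp only [hx, if_true, heven x]
    ring
  · simp [hx]

theorem integral_norm_Eop_le {h : (Fin d → ℝ) → ℂ} (hi : Integrable h volume) :
    ∫ x, ‖Eop j h x‖ ≤ ∫ x, ‖h x‖ := by
  have hσ : Integrable (fun x => h (reflCoord j x)) volume := integrable_comp_refl hi
  have hmajInt : Integrable (fun x => (‖h x‖ + ‖h (reflCoord j x)‖) / 2) volume :=
    (hi.norm.add hσ.norm).div_const 2
  have hEInt : Integrable (Eop j h) volume := by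
    refine Integrable.mono' hmajInt (aesm_Eop hi.aestronglyMeasurable)
      (Filter.Eventually.of_forall fun x => ?_)
    unfold Eop
    by_cases hx : 0 < x j
    · simp only [hx, if_true]
      rw [norm_div]
      simp only [Complex.norm_ofNat]
      exact div_le_div_of_nonneg_right (norm_add_le _ _) (by norm_num)
    · simp only [hx, if_false, norm_zero]
      positivity
  have h1 : ∫ x, ‖Eop j h x‖ ≤ ∫ x, (‖h x‖ + ‖h (reflCoord j x)‖) / 2 := by
    refine MeasureTheory.integral_mono hEInt.norm hmajInt fun x => ?_
    unfold Eop
    by_cases hx : 0 < x j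
    · simp only [hx, if_true]
      rw [norm_div]
      simp only [Complex.norm_ofNat]
      exact div_le_div_of_nonneg_right (norm_add_le _ _) (by norm_num)
    · simp only [hx, if_false, norm_zero]
      positivity
  refine h1.trans (le_of_eq ?_)
  rw [MeasureTheory.integral_div, MeasureTheory.integral_add hi.norm hσ.norm]
  have : ∫ x, ‖h (reflCoord j x)‖ = ∫ x, ‖h x‖ :=
    (reflCoord_mp j).integral_comp (reflCoord_emb j) (fun y => ‖h y‖)
  rw [this]
  ring

theorem H1Decomp_Eop {F : (Fin d → ℝ) → ℂ} {a : ℕ → (Fin d → ℝ) → ℂ} {lam : ℕ → ℝ}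
    (hF : Integrable F volume) (heven : ∀ x, F (reflCoord j x) = F x)
    (hd : H1Decomp F a lam) :
    H1Decomp (fun x => if 0 < x j then F x else 0)
      (fun i x => ((kap d)⁻¹ : ℝ) * Eop j (a i) x) (fun i => kap d * lam i) := by
  obtain ⟨hatoms, hsum, htend⟩ := hd
  have hInt : ∀ i, Integrable (a i) volume := by
    intro i
    obtain ⟨Q, hQ⟩ := hatoms i
    exact hQ.integrable
  refine ⟨fun i => ?_, hsum.mul_left _, ?_⟩
  · obtain ⟨Q, hQ⟩ := hatoms i
    exact atom_Eop j hQ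
  · have key : ∀ n, (fun x => (∑ i ∈ Finset.range n,
        ((kap d * lam i : ℝ) : ℂ) * (((kap d)⁻¹ : ℝ) * Eop j (a i) x))
          - (if 0 < x j then F x else 0))
        = fun x => Eop j (fun y => (∑ i ∈ Finset.range n, (lam i : ℂ) * a i y) - F y) x := by
      intro n
      funext x
      rw [Eop_sub, Eop_sum, Eop_even heven]
      congr 1
      refine Finset.sum_congr rfl fun i _ => ?_
      have hk : ((kap d : ℝ) : ℂ) ≠ 0 := by
        simpa using kap_pos.ne' (α := ℝ)
      rw [Eop_cmul]
      push_cast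
      field_simp
    refine squeeze_zero (fun n => MeasureTheory.integral_nonneg fun x => norm_nonneg _)
      (fun n => ?_) htend
    have hSn : Integrable (fun y => (∑ i ∈ Finset.range n, (lam i : ℂ) * a i y) - F y) volume := by
      refine Integrable.sub ?_ hF
      refine MeasureTheory.integrable_finset_sum _ fun i _ => (hInt i).const_mul _
    calc ∫ x, ‖(∑ i ∈ Finset.range n,
            ((kap d * lam i : ℝ) : ℂ) * (((kap d)⁻¹ : ℝ) * Eop j (a i) x))
            - (if 0 < x j then F x else 0)‖
        = ∫ x, ‖Eop j (fun y => (∑ i ∈ Finset.range n, (lam i : ℂ) * a i y) - F y) x‖ := by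
          refine MeasureTheory.integral_congr_ae (Filter.Eventually.of_forall fun x => ?_)
          exact congrArg norm (congrFun (key n) x)
      _ ≤ ∫ x, ‖(∑ i ∈ Finset.range n, (lam i : ℂ) * a i x) - F x‖ :=
          integral_norm_Eop_le hSn

end Contract
section NonInt

variable {d : ℕ}

def cubeA (d R : ℕ) : Cube d := ⟨fun _ => -(R + 1 : ℝ), 2 * R + 2, by positivity⟩

def cubeB (j : Fin d) (R : ℕ) : Cube d :=
  ⟨fun i => if i = j then (2 * R + 3 : ℝ) else -(R + 1), 2 * R + 2, by positivity⟩

def cubeQ (d R : ℕ) : Cube d := ⟨fun _ => -(4 * R + 6 : ℝ), 8 * R + 12, by positivity⟩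

variable {j : Fin d}

def uu (j : Fin d) (R : ℕ) : (Fin d → ℝ) → ℝ := fun x =>
  Set.indicator (cubeA d R).toSet (fun _ => 1) x - Set.indicator (cubeB j R).toSet (fun _ => 1) x

theorem uu_measurable (R : ℕ) : Measurable (uu j R) :=
  ((measurable_const.indicator (cubeA d R).measurableSet_toSet).sub
    (measurable_const.indicator (cubeB j R).measurableSet_toSet))

theorem AB_disjoint (R : ℕ) (x : Fin d → ℝ) (hx : x ∈ (cubeA d R).toSet) :
    x ∉ (cubeB j R).toSet := by
  intro hB
  have h1 := (hx j).2
  have h2 := (hB j).1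
  simp only [cubeA, cubeB, eq_self_iff_true, if_true] at h1 h2
  linarith

theorem uu_abs_le (R : ℕ) (x : Fin d → ℝ) : |uu j R x| ≤ 1 := by
  unfold uu
  by_cases hA : x ∈ (cubeA d R).toSet
  · rw [Set.indicator_of_mem hA, Set.indicator_of_notMem (AB_disjoint R x hA)]
    norm_num
  · rw [Set.indicator_of_notMem hA]
    by_cases hB : x ∈ (cubeB j R).toSet
    · rw [Set.indicator_of_mem hB]; norm_num
    · rw [Set.indicator_of_notMem hB]; norm_num

theorem uu_support (R : ℕ) (x : Fin d → ℝ) (hx : x ∉ (cubeQ d R).toSet) : uu j R x = 0 := by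
  have hA : x ∉ (cubeA d R).toSet := by
    intro hA
    apply hx
    intro i
    have := hA i
    simp only [cubeA, cubeQ] at this ⊢
    push_cast at this ⊢
    constructor <;> [linarith [this.1]; linarith [this.2]]
  have hB : x ∉ (cubeB j R).toSet := by
    intro hB
    apply hx
    intro i
    have := hB i
    simp only [cubeB, cubeQ] at this ⊢
    by_cases hij : i = j
    · rw [if_pos hij] at this
      push_cast at this ⊢
      constructor <;> [linarith [this.1]; linarith [this.2]]
    · rw [if_neg hij] at this
      push_cast at this ⊢
      constructor <;> [linarith [this.1]; linarith [this.2]]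
  unfold uu
  rw [Set.indicator_of_notMem hA, Set.indicator_of_notMem hB, sub_zero]

theorem uu_eventually_one (x : Fin d → ℝ) : ∀ᶠ R : ℕ in atTop, uu j R x = 1 := by
  obtain ⟨N, hN⟩ := exists_nat_gt (∑ i, |x i|)
  rw [Filter.eventually_atTop]
  refine ⟨N, fun R hR => ?_⟩
  have hbound : ∀ i, |x i| < N := fun i =>
    lt_of_le_of_lt (Finset.single_le_sum (f := fun i => |x i|)
      (fun i _ => abs_nonneg _) (Finset.mem_univ i)) hN
  have hRN : (N : ℝ) ≤ R := Nat.cast_le.mpr hR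
  have hA : x ∈ (cubeA d R).toSet := by
    intro i
    have := abs_lt.mp (hbound i)
    simp only [cubeA]
    push_cast
    constructor <;> linarith
  have hB : x ∉ (cubeB j R).toSet := AB_disjoint R x hA
  unfold uu
  rw [Set.indicator_of_mem hA, Set.indicator_of_notMem hB, sub_zero]

theorem integrable_indC (Q : Cube d) :
    Integrable (Set.indicator Q.toSet (fun _ => (1:ℂ))) volume := by
  rw [← memLp_one_iff_integrable]
  exact memLp_indicator_const 1 Q.measurableSet_toSet 1 (Or.inr Q.volume_toSet_lt_top.ne)

theorem uuC_eq (R : ℕ) : (fun x => (uu j R x : ℂ)) = fun x =>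
    Set.indicator (cubeA d R).toSet (fun _ => (1:ℂ)) x
      - Set.indicator (cubeB j R).toSet (fun _ => (1:ℂ)) x := by
  funext x
  unfold uu
  by_cases hA : x ∈ (cubeA d R).toSet <;> by_cases hB : x ∈ (cubeB j R).toSet <;>
    simp [Set.indicator_apply, hA, hB]

theorem uuC_integrable (R : ℕ) : Integrable (fun x => (uu j R x : ℂ)) volume := by
  rw [uuC_eq]
  exact (integrable_indC _).sub (integrable_indC _)

theorem uuC_integral (R : ℕ) : ∫ x, (uu j R x : ℂ) = 0 := by
  rw [uuC_eq, MeasureTheory.integral_sub (integrable_indC _) (integrable_indC _)]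
  rw [MeasureTheory.integral_indicator_const _ (cubeA d R).measurableSet_toSet,
    MeasureTheory.integral_indicator_const _ (cubeB j R).measurableSet_toSet]
  rw [measureReal_def, measureReal_def, Cube.volume_toSet, Cube.volume_toSet]
  have : (cubeA d R).vol = (cubeB j R).vol := rfl
  rw [this, sub_self]

end NonInt
section NonInt2

variable {d : ℕ} {j : Fin d}

theorem atom_uu (R : ℕ) (c : ℂ) (hc : ‖c‖ = ((cubeQ d R).vol)⁻¹) :
    IsAtomIn (fun x => c * (uu j R x : ℂ)) (cubeQ d R) := by
  have hvolpos := (cubeQ d R).vol_pos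
  set V := (cubeQ d R).vol with hVdef
  have hmeas : AEStronglyMeasurable (fun x => c * (uu j R x : ℂ)) volume :=
    ((Complex.measurable_ofReal.comp (uu_measurable R)).const_mul c).aestronglyMeasurable
  have hbound : ∀ x, ‖c * (uu j R x : ℂ)‖ ≤
      Set.indicator (cubeQ d R).toSet (fun _ => V⁻¹) x := by
    intro x
    by_cases hx : x ∈ (cubeQ d R).toSet
    · rw [Set.indicator_of_mem hx, norm_mul, hc, Complex.norm_real, Real.norm_eq_abs]
      calc V⁻¹ * |uu j R x| ≤ V⁻¹ * 1 :=
            mul_le_mul_of_nonneg_left (uu_abs_le R x) (by positivity)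
        _ = V⁻¹ := mul_one _
    · rw [Set.indicator_of_notMem hx, uu_support R x hx]
      simp
  have heLp : eLpNorm (fun x => c * (uu j R x : ℂ)) 2 volume ≤
      ENNReal.ofReal (Real.sqrt V)⁻¹ := by
    calc eLpNorm (fun x => c * (uu j R x : ℂ)) 2 volume
        ≤ eLpNorm (Set.indicator (cubeQ d R).toSet (fun _ => V⁻¹)) 2 volume :=
          eLpNorm_mono fun x => by
            rw [Real.norm_eq_abs, abs_of_nonneg]
            · exact hbound x
            · by_cases hx : x ∈ (cubeQ d R).toSet <;>
                simp [Set.indicator_apply, hx, inv_nonneg, hvolpos.le]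
      _ = ‖V⁻¹‖ₑ * volume (cubeQ d R).toSet ^ (1 / (2:ℝ≥0∞).toReal) :=
          eLpNorm_indicator_const (cubeQ d R).measurableSet_toSet (by norm_num) (by norm_num)
      _ = ENNReal.ofReal (Real.sqrt V)⁻¹ := by
          have e1 : (1 / (2:ℝ≥0∞).toReal) = (1/2 : ℝ) := by norm_num
          rw [Cube.volume_toSet, ← hVdef, e1]
          rw [Real.enorm_eq_ofReal (by positivity : (0:ℝ) ≤ V⁻¹),
            ENNReal.ofReal_rpow_of_nonneg hvolpos.le (by norm_num),
            ← Real.sqrt_eq_rpow, ← ENNReal.ofReal_mul (by positivity)]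
          congr 1
          have hs : Real.sqrt V ≠ 0 := (Real.sqrt_pos.mpr hvolpos).ne'
          rw [show V = Real.sqrt V * Real.sqrt V from (Real.mul_self_sqrt hvolpos.le).symm]
          field_simp
          rw [Real.sqrt_sq (Real.sqrt_nonneg V)]
  refine ⟨⟨hmeas, lt_of_le_of_lt heLp ENNReal.ofReal_lt_top⟩,
    fun x hx => by simp only [uu_support R x hx]; simp, ?_, heLp⟩
  rw [MeasureTheory.integral_const_mul, uuC_integral, mul_zero]

theorem norm_sq_ofReal_sub (t r : ℝ) (w : ℂ) (ht : t ≠ 0) :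
    r * w.re = (t^2*r^2 + ‖w‖^2 - ‖((t*r : ℝ) : ℂ) - w‖^2) / (2*t) := by
  have e1 : ‖((t*r : ℝ) : ℂ) - w‖^2 = (t*r - w.re)^2 + w.im^2 := by
    rw [Complex.sq_norm, Complex.normSq_apply]
    simp [Complex.sub_re, Complex.sub_im]
    ring
  have e2 : ‖w‖^2 = w.re^2 + w.im^2 := by
    rw [Complex.sq_norm, Complex.normSq_apply]
    ring
  rw [e1, e2]
  field_simp
  ring

theorem norm_sq_ofReal_mul_I_sub (t r : ℝ) (w : ℂ) (ht : t ≠ 0) :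
    r * w.im = (t^2*r^2 + ‖w‖^2 - ‖((t*r : ℝ) : ℂ) * Complex.I - w‖^2) / (2*t) := by
  have e1 : ‖((t*r : ℝ) : ℂ) * Complex.I - w‖^2 = w.re^2 + (t*r - w.im)^2 := by
    rw [Complex.sq_norm, Complex.normSq_apply]
    simp [Complex.sub_re, Complex.sub_im, Complex.mul_re, Complex.mul_im]
    ring
  have e2 : ‖w‖^2 = w.re^2 + w.im^2 := by
    rw [Complex.sq_norm, Complex.normSq_apply]
    ring
  rw [e1, e2]
  field_simp
  ring

end NonInt2
section Key

variable {d : ℕ} {j : Fin d}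

theorem key_nonmeas {G : (Fin d → ℝ) → ℂ}
    (hGn : AEStronglyMeasurable (fun x => ‖G x‖) volume)
    (hG : ¬ AEStronglyMeasurable G volume) :
    ∃ R : ℕ, ∀ t : ℝ, 0 < t →
      ¬ Integrable (fun x => ‖((t * uu j R x : ℝ) : ℂ) - G x‖) volume ∨
      ¬ Integrable (fun x => ‖((t * uu j R x : ℝ) : ℂ) * Complex.I - G x‖) volume := by
  by_contra hcon
  push_neg at hcon
  have haesm : ∀ R : ℕ, AEStronglyMeasurable (fun x => (uu j R x : ℂ) * G x) volume := by
    intro R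
    obtain ⟨t, ht, h1, h2⟩ := hcon R
    have hu : Measurable (uu j R) := uu_measurable R
    have hu2 : AEStronglyMeasurable (fun x => t^2 * (uu j R x)^2) volume := by
      refine Measurable.aestronglyMeasurable ?_
      have := (hu.mul hu).const_mul (t^2)
      simpa [pow_two] using this
    have hn2 : AEStronglyMeasurable (fun x => ‖G x‖^2) volume := by
      simpa [pow_two, Pi.mul_def] using hGn.mul hGn
    have hre : AEStronglyMeasurable (fun x => uu j R x * (G x).re) volume := by
      have heq : (fun x => uu j R x * (G x).re)
          = fun x => (t^2*(uu j R x)^2 + ‖G x‖^2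
              - ‖((t * uu j R x : ℝ) : ℂ) - G x‖^2) * (2*t)⁻¹ := by
        funext x
        rw [← div_eq_mul_inv]
        exact norm_sq_ofReal_sub t (uu j R x) (G x) ht.ne'
      rw [heq]
      have hp2 : AEStronglyMeasurable
          (fun x => ‖((t * uu j R x : ℝ) : ℂ) - G x‖^2) volume := by
        simpa [pow_two, Pi.mul_def] using h1.aestronglyMeasurable.mul h1.aestronglyMeasurable
      exact ((hu2.add hn2).sub hp2).mul_const _
    have him : AEStronglyMeasurable (fun x => uu j R x * (G x).im) volume := by
      have heq : (fun x => uu j R x * (G x).im)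
          = fun x => (t^2*(uu j R x)^2 + ‖G x‖^2
              - ‖((t * uu j R x : ℝ) : ℂ) * Complex.I - G x‖^2) * (2*t)⁻¹ := by
        funext x
        rw [← div_eq_mul_inv]
        exact norm_sq_ofReal_mul_I_sub t (uu j R x) (G x) ht.ne'
      rw [heq]
      have hp2 : AEStronglyMeasurable
          (fun x => ‖((t * uu j R x : ℝ) : ℂ) * Complex.I - G x‖^2) volume := by
        simpa [pow_two, Pi.mul_def] using h2.aestronglyMeasurable.mul h2.aestronglyMeasurable
      exact ((hu2.add hn2).sub hp2).mul_const _
    have heq2 : (fun x => (uu j R x : ℂ) * G x)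
        = fun x => ((uu j R x * (G x).re : ℝ) : ℂ)
            + ((uu j R x * (G x).im : ℝ) : ℂ) * Complex.I := by
      funext x
      apply Complex.ext <;>
        simp [Complex.mul_re, Complex.mul_im, Complex.add_re, Complex.add_im]
    rw [heq2]
    exact (Complex.continuous_ofReal.comp_aestronglyMeasurable hre).add
      ((Complex.continuous_ofReal.comp_aestronglyMeasurable him).mul_const Complex.I)
  refine hG (aestronglyMeasurable_of_tendsto_ae atTop haesm (MeasureTheory.ae_of_all _ fun x => ?_))
  refine Filter.Tendsto.congr' ?_ (tendsto_const_nhds (x := G x))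
  filter_upwards [uu_eventually_one (j := j) x] with R hR
  rw [hR]
  simp

theorem single_decomp {G : (Fin d → ℝ) → ℂ} (a₀ : (Fin d → ℝ) → ℂ)
    (h0 : IsClassicalAtom a₀) (ε : ℝ)
    (hzero : ∫ x, ‖(ε : ℂ) * a₀ x - G x‖ = 0) :
    H1Decomp G (fun i => if i = 0 then a₀ else 0) (fun i => if i = 0 then ε else 0) := by
  refine ⟨fun i => ?_, ?_, ?_⟩
  · by_cases hi : i = 0
    · simpa [hi] using h0
    · simp only [hi, if_false]
      exact ⟨⟨fun _ => 0, 1, one_pos⟩, MemLp.zero', fun x _ => rfl, by simp,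
        by simp⟩
  · exact summable_of_ne_finset_zero (s := {0}) fun i hi => if_neg (by simpa using hi)
  · have hev : (fun n => ∫ x, ‖(∑ i ∈ Finset.range n,
        ((if i = 0 then ε else 0 : ℝ) : ℂ) * (if i = 0 then a₀ else 0) x) - G x‖)
        =ᶠ[atTop] (fun _ => (0:ℝ)) := by
      rw [Filter.eventuallyEq_iff_exists_mem]
      refine ⟨{n | 1 ≤ n}, Filter.mem_atTop 1, fun n hn => ?_⟩
      have hsum : ∀ x, (∑ i ∈ Finset.range n,
          ((if i = 0 then ε else 0 : ℝ) : ℂ) * (if i = 0 then a₀ else 0) x) = (ε : ℂ) * a₀ x := by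
        intro x
        rw [Finset.sum_eq_single_of_mem 0 (Finset.mem_range.mpr hn)]
        · simp
        · intro b _ hb
          simp [hb]
      simp only [hsum]
      exact hzero
    exact (Filter.Tendsto.congr' hev.symm tendsto_const_nhds)

end Key
section Case2

variable {d : ℕ} {j : Fin d}

theorem zero_atom : IsClassicalAtom (fun _ : Fin d → ℝ => (0 : ℂ)) :=
  ⟨⟨fun _ => 0, 1, one_pos⟩, MemLp.zero', fun _ _ => rfl, by simp, by
    have : eLpNorm (fun _ : Fin d → ℝ => (0:ℂ)) 2 volume = 0 := eLpNorm_zero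
    simp [this]⟩

theorem tsum_abs_single {ε : ℝ} (hε : 0 ≤ ε) :
    (∑' i : ℕ, |if i = 0 then ε else 0|) = ε := by
  have h : (fun i : ℕ => |if i = 0 then ε else 0|) = fun i => if i = 0 then ε else 0 :=
    funext fun i => by by_cases hi : i = 0 <;> simp [hi, abs_of_nonneg hε]
  rw [h, tsum_ite_eq]

theorem case2_decomp {F : (Fin d → ℝ) → ℂ} (hF : ¬ Integrable F volume)
    (heven : ∀ x, F (reflCoord j x) = F x) :
    ∀ ε : ℝ, 0 < ε → ∃ a lam, H1Decomp (fun x => if 0 < x j then F x else 0) a lam ∧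
      (∑' i, |lam i|) ≤ ε := by
  intro ε hε
  set G := fun x => if 0 < x j then F x else 0 with hGdef
  by_cases hGn : Integrable (fun x => ‖G x‖) volume
  · -- `G` is not a.e. strongly measurable
    have haesm_not : ¬ AEStronglyMeasurable G volume := by
      intro hGa
      apply hF
      have hGi : Integrable G volume := ⟨hGa, (hasFiniteIntegral_norm_iff G).mp hGn.2⟩
      have hGσ : Integrable (fun x => G (reflCoord j x)) volume := integrable_comp_refl hGi
      refine (hGi.add hGσ).congr ?_
      have hae : ∀ᵐ x : Fin d → ℝ, x j ≠ 0 := by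
        rw [MeasureTheory.ae_iff]
        simpa [not_not] using hyperplane_null j
      filter_upwards [hae] with x hx
      have hrefl : (reflCoord j x) j = -x j := by rw [reflCoord_apply, if_pos rfl]
      rcases lt_or_gt_of_ne hx with hneg | hpos
      · have h1 : G x = 0 := if_neg (not_lt.mpr hneg.le)
        have h2 : G (reflCoord j x) = F (reflCoord j x) := by
          rw [hGdef]
          simp only [hrefl]
          rw [if_pos (by linarith)]
        simp only [Pi.add_apply, h1, h2, heven x, zero_add]
      · have h1 : G x = F x := if_pos hpos
        have h2 : G (reflCoord j x) = 0 := by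
          rw [hGdef]
          simp only [hrefl]
          rw [if_neg (by simp; linarith)]
        simp only [Pi.add_apply, h1, h2, add_zero]
    obtain ⟨R, hR⟩ := key_nonmeas (j := j) hGn.aestronglyMeasurable haesm_not
    have hVpos : 0 < (cubeQ d R).vol := (cubeQ d R).vol_pos
    set V := (cubeQ d R).vol with hV
    set t := ε / V with htdef
    have htpos : 0 < t := div_pos hε hVpos
    rcases hR t htpos with hbad | hbad
    · refine ⟨_, _, single_decomp (fun x => ((V⁻¹ : ℝ) : ℂ) * (uu j R x : ℂ))
        ⟨_, atom_uu R _ ?_⟩ ε ?_, ?_⟩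
      · rw [Complex.norm_real, Real.norm_eq_abs, abs_of_nonneg (by positivity)]
      · have heqf : (fun x => ‖(ε:ℂ) * (((V⁻¹ : ℝ) : ℂ) * (uu j R x : ℂ)) - G x‖)
            = fun x => ‖((t * uu j R x : ℝ) : ℂ) - G x‖ := by
          funext x
          congr 2
          rw [htdef]
          push_cast
          have : (V:ℂ) ≠ 0 := by
            simpa using hVpos.ne'
          field_simp
        rw [heqf]
        exact MeasureTheory.integral_undef hbad
      · rw [tsum_abs_single hε.le]
    · refine ⟨_, _, single_decomp (fun x => (((V⁻¹ : ℝ) : ℂ) * Complex.I) * (uu j R x : ℂ))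
        ⟨_, atom_uu R _ ?_⟩ ε ?_, ?_⟩
      · rw [norm_mul, Complex.norm_real, Complex.norm_I, mul_one, Real.norm_eq_abs,
          abs_of_nonneg (by positivity)]
      · have heqf : (fun x => ‖(ε:ℂ) * ((((V⁻¹ : ℝ) : ℂ) * Complex.I) * (uu j R x : ℂ)) - G x‖)
            = fun x => ‖((t * uu j R x : ℝ) : ℂ) * Complex.I - G x‖ := by
          funext x
          congr 2
          rw [htdef]
          push_cast
          have : (V:ℂ) ≠ 0 := by
            simpa using hVpos.ne'
          field_simp
        rw [heqf]
        exact MeasureTheory.integral_undef hbad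
      · rw [tsum_abs_single hε.le]
  · -- the norm of `G` is itself not integrable
    refine ⟨_, _, single_decomp (fun _ => (0:ℂ)) zero_atom ε ?_, ?_⟩
    · have heqf : (fun x => ‖(ε:ℂ) * (0:ℂ) - G x‖) = fun x => ‖G x‖ := by
        funext x; simp
      rw [heqf]
      exact MeasureTheory.integral_undef hGn
    · rw [tsum_abs_single hε.le]

end Case2
/-- restriction of an even `H¹` function to the upper half-space stays in `H¹`. -/
theorem statement1 (d : ℕ) (j : Fin d) :
    ∃ C : ℝ, 0 < C ∧ ∀ F : (Fin d → ℝ) → ℂ,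
      MemH1 F → (∀ x, F (reflCoord j x) = F x) →
      MemH1 (fun x => if 0 < x j then F x else 0) ∧
        H1Norm (fun x => if 0 < x j then F x else 0) ≤ C * H1Norm F := by
  refine ⟨kap d, kap_pos, fun F hFmem heven => ?_⟩
  set G := fun x => if 0 < x j then F x else 0 with hGdef
  set SG := {r | ∃ a lam, H1Decomp G a lam ∧ r = ∑' i, |lam i|} with hSGdef
  set SF := {r | ∃ a lam, H1Decomp F a lam ∧ r = ∑' i, |lam i|} with hSFdef
  have hSGbdd : BddBelow SG := by
    refine ⟨0, fun r hr => ?_⟩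
    obtain ⟨a, lam, _, rfl⟩ := hr
    exact tsum_nonneg fun i => abs_nonneg _
  have hHG : H1Norm G = sInf SG := rfl
  have hHF : H1Norm F = sInf SF := rfl
  have hHFnonneg : 0 ≤ H1Norm F := by
    rw [hHF]
    refine Real.sInf_nonneg fun r hr => ?_
    obtain ⟨a, lam, _, rfl⟩ := hr
    exact tsum_nonneg fun i => abs_nonneg _
  by_cases hF : Integrable F volume
  · -- main case
    obtain ⟨a0, lam0, hd0⟩ := hFmem
    constructor
    · exact ⟨_, _, H1Decomp_Eop hF heven hd0⟩
    · have hkey : ∀ r ∈ SF, H1Norm G ≤ kap d * r := by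
        rintro r ⟨a, lam, hd, rfl⟩
        have hmem : kap d * ∑' i, |lam i| ∈ SG := by
          refine ⟨_, _, H1Decomp_Eop hF heven hd, ?_⟩
          have habs : (fun i => |kap d * lam i|) = fun i => kap d * |lam i| :=
            funext fun i => by rw [abs_mul, abs_of_pos kap_pos]
          rw [habs, tsum_mul_left]
        rw [hHG]
        exact csInf_le hSGbdd hmem
      have hne : SF.Nonempty := ⟨_, a0, lam0, hd0, rfl⟩
      have hdiv : H1Norm G / kap d ≤ sInf SF := by
        refine le_csInf hne fun r hr => ?_
        rw [div_le_iff₀ kap_pos]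
        rw [mul_comm]
        exact hkey r hr
      rw [div_le_iff₀ kap_pos] at hdiv
      rw [hHF]
      linarith [hdiv]
  · -- degenerate case
    have hdec := case2_decomp (j := j) hF heven
    constructor
    · obtain ⟨a, lam, hd, _⟩ := hdec 1 one_pos
      exact ⟨_, _, hd⟩
    · have hle : ∀ ε : ℝ, 0 < ε → H1Norm G ≤ ε := by
        intro ε hε
        obtain ⟨a, lam, hd, hsum⟩ := hdec ε hε
        rw [hHG]
        exact le_trans (csInf_le hSGbdd ⟨_, _, hd, rfl⟩) hsum
      have hnonneg : 0 ≤ kap d * H1Norm F := mul_nonneg kap_pos.le hHFnonneg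
      by_contra hcon
      push_neg at hcon
      have hpos : 0 < H1Norm G := lt_of_le_of_lt hnonneg hcon
      have := hle (H1Norm G / 2) (by linarith)
      linarith
end
end

section
/- Let $a$ be a classical atom on $\mathbb{R}^d$ supported in a cube $Q$ with $Q \cap \langle e\rangle^\perp \ne \emptyset$ for a coordinate vector $e$ (i.e., $Q$ meets the hyperplane $\{x\cdot e = 0\}$). Then $\widetilde a = a\,\mathbf{1}_{\{x\cdot e>0\}} - (a\,\mathbf{1}_{\{x\cdot e>0\}})\circ\sigma_e$ is supported in a cube $\widetilde Q$ with $Q \cup \sigma_e(Q) \subset \widetilde Q$, $l(\widetilde Q) \le 2\,l(Q)$, $\int \widetilde a = 0$, and $\|\widetilde a\|_{L^2} \le 2^{1+d/2}\,|\widetilde Q|^{-1/2}$; hence $2^{-1-d/2}\widetilde a$ is a classical atom. -/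
open MeasureTheory Filter Topology ENNReal

noncomputable section

namespace Aux
variable {d : ℕ}

lemma reflCoord_apply (j : Fin d) (x : Fin d → ℝ) (i : Fin d) :
    reflCoord j x i = if i = j then -(x j) else x i := by
  simp [reflCoord, Function.update_apply]

lemma reflCoord_self (j : Fin d) (x : Fin d → ℝ) : reflCoord j x j = -(x j) := by
  simp [reflCoord_apply]

lemma reflCoord_invol (j : Fin d) : Function.Involutive (reflCoord j) := by
  intro x; funext i
  by_cases h : i = j <;> simp [reflCoord_apply, h]

lemma measurable_reflCoord (j : Fin d) : Measurable (reflCoord j) := by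
  rw [measurable_pi_iff]
  intro i
  simp only [reflCoord_apply]
  by_cases h : i = j
  · subst h; simp only [if_pos rfl]
    exact (measurable_pi_apply i).neg
  · simp only [if_neg h]
    exact measurable_pi_apply i

def reflME (j : Fin d) : (Fin d → ℝ) ≃ᵐ (Fin d → ℝ) where
  toEquiv := ⟨reflCoord j, reflCoord j, reflCoord_invol j, reflCoord_invol j⟩
  measurable_toFun := measurable_reflCoord j
  measurable_invFun := measurable_reflCoord j

lemma mp_reflCoord (j : Fin d) :
    MeasurePreserving (reflCoord j) (volume : Measure (Fin d → ℝ)) volume := by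
  have h : reflCoord j = fun (x : Fin d → ℝ) i =>
      (if i = j then (fun t : ℝ => -t) else id) (x i) := by
    funext x i; by_cases h : i = j <;> simp [reflCoord_apply, h]
  rw [h]
  exact volume_preserving_pi fun i => by
    by_cases h : i = j <;> simp [h, Measure.measurePreserving_neg, MeasurePreserving.id]

lemma toSet_eq (Q : Cube d) :
    Q.toSet = Set.univ.pi fun i => Set.Ioo (Q.corner i) (Q.corner i + Q.side) := by
  ext x; simp [Cube.toSet, Set.mem_pi]

lemma measurableSet_toSet (Q : Cube d) : MeasurableSet Q.toSet := by
  rw [toSet_eq]; exact MeasurableSet.univ_pi fun i => measurableSet_Ioo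

lemma volume_toSet (Q : Cube d) : volume Q.toSet = ENNReal.ofReal Q.vol := by
  rw [toSet_eq, volume_pi_pi]
  simp [Real.volume_Ioo, Cube.vol, ← ENNReal.ofReal_pow Q.side_pos.le]

end Aux

/-- odd reflection of an atom whose cube meets the hyperplane is a scaled atom. -/
theorem statement3 {d : ℕ} (j : Fin d) (Q : Cube d) (a : (Fin d → ℝ) → ℂ)
    (hatom : IsAtomIn a Q) (hmeet : ∃ x ∈ Q.toSet, x j = 0) :
    ∃ Qt : Cube d,
      Q.toSet ∪ (reflCoord j '' Q.toSet) ⊆ Qt.toSet ∧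
      Qt.side ≤ 2 * Q.side ∧
      (∀ x, x ∉ Qt.toSet → ((if 0 < x j then a x else 0) -
          (if 0 < reflCoord j x j then a (reflCoord j x) else 0)) = 0) ∧
      (∫ x, ((if 0 < x j then a x else 0) -
          (if 0 < reflCoord j x j then a (reflCoord j x) else 0)) = 0) ∧
      eLpNorm (fun x => (if 0 < x j then a x else 0) -
          (if 0 < reflCoord j x j then a (reflCoord j x) else 0)) 2 volume ≤
        ENNReal.ofReal ((2 : ℝ) ^ ((1 : ℝ) + (d : ℝ) / 2) * (Real.sqrt Qt.vol)⁻¹) ∧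
      IsAtomIn (fun x => (((2 : ℝ) ^ (-(1 : ℝ) - (d : ℝ) / 2) : ℝ) : ℂ) *
          ((if 0 < x j then a x else 0) -
            (if 0 < reflCoord j x j then a (reflCoord j x) else 0))) Qt := by
  obtain ⟨ha2, hsupp, hint, hnorm⟩ := hatom
  obtain ⟨x0, hx0Q, hx0j⟩ := hmeet
  have hl0 : 0 < Q.side := Q.side_pos
  have hcj : Q.corner j < 0 := by have h := (hx0Q j).1; rwa [hx0j] at h
  have hcjl : 0 < Q.corner j + Q.side := by have h := (hx0Q j).2; rwa [hx0j] at h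
  set Qt : Cube d :=
    ⟨fun i => if i = j then -Q.side else Q.corner i - Q.side / 2, 2 * Q.side,
      by linarith⟩ with hQtdef
  -- subset facts
  have hQsub : Q.toSet ⊆ Qt.toSet := by
    intro x hx i
    have h1 := (hx i).1; have h2 := (hx i).2
    show Qt.corner i < x i ∧ x i < Qt.corner i + Qt.side
    show (if i = j then -Q.side else Q.corner i - Q.side / 2) < x i ∧
      x i < (if i = j then -Q.side else Q.corner i - Q.side / 2) + 2 * Q.side
    by_cases h : i = j
    · subst h; rw [if_pos rfl]; constructor <;> linarith
    · rw [if_neg h]; constructor <;> linarith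
  have hRsub : reflCoord j '' Q.toSet ⊆ Qt.toSet := by
    rintro y ⟨x, hx, rfl⟩ i
    show Qt.corner i < reflCoord j x i ∧ reflCoord j x i < Qt.corner i + Qt.side
    show (if i = j then -Q.side else Q.corner i - Q.side / 2) < reflCoord j x i ∧
      reflCoord j x i < (if i = j then -Q.side else Q.corner i - Q.side / 2) + 2 * Q.side
    by_cases h : i = j
    · subst h
      rw [if_pos rfl, Aux.reflCoord_self]
      have h1 := (hx i).1; have h2 := (hx i).2
      constructor <;> linarith
    · rw [if_neg h, Aux.reflCoord_apply, if_neg h]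
      have h1 := (hx i).1; have h2 := (hx i).2
      constructor <;> linarith
  -- the functions
  set f : (Fin d → ℝ) → ℂ := fun y => if 0 < y j then a y else 0 with hfdef
  set b : (Fin d → ℝ) → ℂ := fun x => f x - f (reflCoord j x) with hbdef
  have hfind : f = Set.indicator {y : Fin d → ℝ | 0 < y j} a := by
    funext y; simp [hfdef, Set.indicator_apply, Set.mem_setOf_eq]
  have hms : MeasurableSet {y : Fin d → ℝ | 0 < y j} :=
    measurableSet_lt measurable_const (measurable_pi_apply j)
  have hfm : MemLp f 2 volume := by rw [hfind]; exact ha2.indicator hms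
  have hmp := Aux.mp_reflCoord j
  have hfcm : MemLp (f ∘ reflCoord j) 2 volume := hfm.comp_measurePreserving hmp
  have hbm : MemLp b 2 volume := hfm.sub hfcm
  -- support of b
  have hbsupp : ∀ x, x ∉ Qt.toSet → b x = 0 := by
    intro x hx
    have hxQ : x ∉ Q.toSet := fun h => hx (hQsub h)
    have hxR : reflCoord j x ∉ Q.toSet := fun h =>
      hx (hRsub ⟨reflCoord j x, h, Aux.reflCoord_invol j x⟩)
    have h1 : f x = 0 := by
      rw [hfdef]; dsimp only; split_ifs with h
      · exact hsupp x hxQ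
      · rfl
    have h2 : f (reflCoord j x) = 0 := by
      rw [hfdef]; dsimp only; split_ifs with h
      · exact hsupp _ hxR
      · rfl
    rw [hbdef]; dsimp only; rw [h1, h2, sub_zero]
  -- integrability
  have hQtvol : volume Qt.toSet ≠ ⊤ := by rw [Aux.volume_toSet]; exact ofReal_ne_top
  have hQvol : volume Q.toSet ≠ ⊤ := by rw [Aux.volume_toSet]; exact ofReal_ne_top
  have hfsupp : ∀ x, x ∉ Q.toSet → f x = 0 := by
    intro x hx
    rw [hfdef]; dsimp only; split_ifs with h
    · exact hsupp x hx
    · rfl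
  have hfint : Integrable f volume := memLp_one_iff_integrable.mp
    (hfm.mono_exponent_of_measure_support_ne_top hfsupp hQvol one_le_two)
  have hfcint : Integrable (f ∘ reflCoord j) volume :=
    (hmp.integrable_comp_emb (Aux.reflME j).measurableEmbedding).mpr hfint
  have hintc : ∫ x, f (reflCoord j x) = ∫ x, f x :=
    hmp.integral_comp (Aux.reflME j).measurableEmbedding f
  have hbint0 : ∫ x, b x = 0 := by
    have heq : (∫ x, b x) = (∫ x, f x) - ∫ x, f (reflCoord j x) := integral_sub hfint hfcint
    rw [heq, hintc, sub_self]
  -- norm bound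
  have hvolpos : (0:ℝ) < Q.vol := pow_pos hl0 d
  have hsv : (0:ℝ) < Real.sqrt Q.vol := Real.sqrt_pos.mpr hvolpos
  have hQtvolval : Qt.vol = 2 ^ d * Q.vol := by
    simp [Cube.vol, hQtdef, mul_pow]
  have hsq : Real.sqrt Qt.vol = 2 ^ ((d:ℝ)/2) * Real.sqrt Q.vol := by
    rw [hQtvolval, Real.sqrt_mul (by positivity : (0:ℝ) ≤ 2 ^ d)]
    congr 1
    rw [Real.sqrt_eq_rpow, ← Real.rpow_natCast 2 d, ← Real.rpow_mul (by norm_num),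
      show (d:ℝ) * (1/2) = (d:ℝ)/2 by ring]
  have hrpos : (0:ℝ) < 2 ^ ((d:ℝ)/2) := Real.rpow_pos_of_pos two_pos _
  have hkey : (2:ℝ) ^ ((1:ℝ) + (d:ℝ)/2) * (Real.sqrt Qt.vol)⁻¹
      = 2 * (Real.sqrt Q.vol)⁻¹ := by
    have hne1 : (2:ℝ) ^ ((d:ℝ)/2) ≠ 0 := ne_of_gt hrpos
    have hne2 : Real.sqrt Q.vol ≠ 0 := ne_of_gt hsv
    rw [hsq, Real.rpow_add two_pos, Real.rpow_one, mul_inv]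
    field_simp
  have hnorm2 : eLpNorm b 2 volume ≤
      ENNReal.ofReal ((2:ℝ) ^ ((1:ℝ) + (d:ℝ)/2) * (Real.sqrt Qt.vol)⁻¹) := by
    have h1 : eLpNorm b 2 volume ≤ eLpNorm f 2 volume + eLpNorm (f ∘ reflCoord j) 2 volume := by
      rw [hbdef]; exact eLpNorm_sub_le hfm.1 hfcm.1 one_le_two
    have h2 : eLpNorm (f ∘ reflCoord j) 2 volume = eLpNorm f 2 volume :=
      eLpNorm_comp_measurePreserving hfm.1 hmp
    have h3 : eLpNorm f 2 volume ≤ ENNReal.ofReal (Real.sqrt Q.vol)⁻¹ := by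
      rw [hfind]; exact (eLpNorm_indicator_le a).trans hnorm
    calc eLpNorm b 2 volume
        ≤ eLpNorm f 2 volume + eLpNorm (f ∘ reflCoord j) 2 volume := h1
      _ = 2 * eLpNorm f 2 volume := by rw [h2, two_mul]
      _ ≤ 2 * ENNReal.ofReal (Real.sqrt Q.vol)⁻¹ := mul_le_mul_right h3 2
      _ = ENNReal.ofReal ((2:ℝ) ^ ((1:ℝ) + (d:ℝ)/2) * (Real.sqrt Qt.vol)⁻¹) := by
          rw [hkey, ENNReal.ofReal_mul (by norm_num : (0:ℝ) ≤ 2), ENNReal.ofReal_ofNat]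
  -- the constant
  have hCpos : (0:ℝ) < 2 ^ (-(1:ℝ) - (d:ℝ)/2) := Real.rpow_pos_of_pos two_pos _
  have hCmul : (2:ℝ) ^ (-(1:ℝ) - (d:ℝ)/2) * (2:ℝ) ^ ((1:ℝ) + (d:ℝ)/2) = 1 := by
    rw [← Real.rpow_add two_pos]
    rw [show (-(1:ℝ) - (d:ℝ)/2) + ((1:ℝ) + (d:ℝ)/2) = 0 by ring, Real.rpow_zero]
  refine ⟨Qt, Set.union_subset hQsub hRsub, le_of_eq rfl, ?_, ?_, ?_, ?_⟩
  · intro x hx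
    exact hbsupp x hx
  · exact hbint0
  · exact hnorm2
  · refine ⟨?_, ?_, ?_, ?_⟩
    · exact hbm.const_mul _
    · intro x hx
      show (((2:ℝ) ^ (-(1:ℝ) - (d:ℝ)/2) : ℝ) : ℂ) * b x = 0
      rw [hbsupp x hx, mul_zero]
    · show (∫ x, (((2:ℝ) ^ (-(1:ℝ) - (d:ℝ)/2) : ℝ) : ℂ) * b x) = 0
      rw [integral_const_mul, hbint0, mul_zero]
    · show eLpNorm (fun x => (((2:ℝ) ^ (-(1:ℝ) - (d:ℝ)/2) : ℝ) : ℂ) * b x) 2 volume ≤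
        ENNReal.ofReal (Real.sqrt Qt.vol)⁻¹
      have hsc : eLpNorm (fun x => (((2:ℝ) ^ (-(1:ℝ) - (d:ℝ)/2) : ℝ) : ℂ) * b x) 2 volume
          = (‖(((2:ℝ) ^ (-(1:ℝ) - (d:ℝ)/2) : ℝ) : ℂ)‖₊ : ℝ≥0∞) * eLpNorm b 2 volume := by
        rw [show (fun x => (((2:ℝ) ^ (-(1:ℝ) - (d:ℝ)/2) : ℝ) : ℂ) * b x)
            = (((2:ℝ) ^ (-(1:ℝ) - (d:ℝ)/2) : ℝ) : ℂ) • b from rfl]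
        rw [eLpNorm_const_smul]
        rfl
      rw [hsc]
      have hnn : (‖(((2:ℝ) ^ (-(1:ℝ) - (d:ℝ)/2) : ℝ) : ℂ)‖₊ : ℝ≥0∞)
          = ENNReal.ofReal ((2:ℝ) ^ (-(1:ℝ) - (d:ℝ)/2)) := by
        rw [Complex.nnnorm_real, ← enorm_eq_nnnorm, Real.enorm_eq_ofReal hCpos.le]
      rw [hnn]
      calc ENNReal.ofReal ((2:ℝ) ^ (-(1:ℝ) - (d:ℝ)/2)) * eLpNorm b 2 volume
          ≤ ENNReal.ofReal ((2:ℝ) ^ (-(1:ℝ) - (d:ℝ)/2)) *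
            ENNReal.ofReal ((2:ℝ) ^ ((1:ℝ) + (d:ℝ)/2) * (Real.sqrt Qt.vol)⁻¹) :=
            mul_le_mul_right hnorm2 _
        _ = ENNReal.ofReal ((2:ℝ) ^ (-(1:ℝ) - (d:ℝ)/2) *
            ((2:ℝ) ^ ((1:ℝ) + (d:ℝ)/2) * (Real.sqrt Qt.vol)⁻¹)) := by
            rw [ENNReal.ofReal_mul hCpos.le]
        _ = ENNReal.ofReal (Real.sqrt Qt.vol)⁻¹ := by
            rw [← mul_assoc, hCmul, one_mul]
end
end

section
/- Fix $d \ge 1$ and let $U = (0,\infty)^{d-1} \times \mathbb{R}$. For $m \in \mathbb{Z}$ let $\mathcal{D}_m$ be the collection of dyadic cubes $D \subset U \cap \{x_d > 0\}$ with corners in $2^{-m}\mathbb{Z}^d$ such that $l(D) = \mathrm{dist}(D, \{x_d = 0\}) = 2^{-m}$. Let $Q \subset U$ be a cube with $l(Q) \le 1$, $Q \cap \{x_d > 0\} \ne \emptyset$ and $2Q \not\subset \{x_d > 0\}$, and write $2^{-m_0-1} < l(Q) \le 2^{-m_0}$. Then the number $j_m$ of cubes $D \in \mathcal{D}_m$ with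 $Q \cap D \ne \emptyset$ satisfies $j_m = 0$ for $m < m_0$ and $j_m \le C_d\, 2^{(m-m_0)(d-1)}$ for $m \ge m_0$, where $C_d = 2^d - 1$. -/
open MeasureTheory Filter Topology ENNReal

noncomputable section

/-- the hyperplane `{x_d = 0}` in `ℝ^{d+1}` -/
def lastHyp (d : ℕ) : Set (Fin (d + 1) → ℝ) := {x | x (Fin.last d) = 0}

/-- the half-space `{x_d > 0}` -/
def lastUpper (d : ℕ) : Set (Fin (d + 1) → ℝ) := {x | 0 < x (Fin.last d)}

/-- `U = (0,∞)^d × ℝ` -/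
def Udom (d : ℕ) : Set (Fin (d + 1) → ℝ) := {x | ∀ i, i ≠ Fin.last d → 0 < x i}

/-- distance of a cube to the hyperplane `{x_d = 0}` -/
def cubeDistToHyp {d : ℕ} (D : Cube (d + 1)) : ℝ :=
  sInf {r | ∃ x ∈ D.toSet, r = Metric.infDist x (lastHyp d)}

/-- the Whitney family `𝒟_m`: dyadic cubes in `U ∩ {x_d > 0}` with corners in `2^{-m}ℤ^{d+1}`,
sidelength `2^{-m}` and distance `2^{-m}` to the hyperplane -/
def WhitneyFam (d : ℕ) (m : ℤ) : Set (Cube (d + 1)) :=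
  {D | D.side = (2 : ℝ) ^ (-m) ∧ (∀ i, ∃ k : ℤ, D.corner i = (k : ℝ) * (2 : ℝ) ^ (-m)) ∧
    D.toSet ⊆ Udom d ∩ lastUpper d ∧ cubeDistToHyp D = (2 : ℝ) ^ (-m)}

lemma infDist_lastHyp_eq {d : ℕ} (x : Fin (d + 1) → ℝ) :
    Metric.infDist x (lastHyp d) = |x (Fin.last d)| := by
  have hy : Function.update x (Fin.last d) 0 ∈ lastHyp d := by simp [lastHyp]
  apply le_antisymm
  · refine (Metric.infDist_le_dist_of_mem hy).trans ?_
    rw [dist_pi_le_iff (abs_nonneg _)]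
    intro i
    rcases eq_or_ne i (Fin.last d) with rfl | hi
    · simp [Real.dist_eq]
    · simp [Function.update_of_ne hi, abs_nonneg]
  · by_contra h
    push_neg at h
    obtain ⟨y, hyH, hlt⟩ := (Metric.infDist_lt_iff ⟨_, hy⟩).1 h
    have h1 : dist (x (Fin.last d)) (y (Fin.last d)) ≤ dist x y := dist_le_pi_dist x y _
    have h2 : y (Fin.last d) = 0 := hyH
    rw [h2, Real.dist_eq, sub_zero] at h1
    linarith

lemma whitney_corner_last {d : ℕ} {m : ℤ} {D : Cube (d + 1)} (hD : D ∈ WhitneyFam d m) :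
    D.corner (Fin.last d) = (2 : ℝ) ^ (-m) := by
  obtain ⟨hside, hcor, hsubD, hdist⟩ := hD
  have hpos := D.side_pos
  have hR : {r | ∃ x ∈ D.toSet, r = Metric.infDist x (lastHyp d)}
      = Set.Ioo (D.corner (Fin.last d)) (D.corner (Fin.last d) + D.side) := by
    ext r
    constructor
    · rintro ⟨x, hx, rfl⟩
      have hxu : 0 < x (Fin.last d) := (hsubD hx).2
      rw [infDist_lastHyp_eq, abs_of_pos hxu]
      exact ⟨(hx (Fin.last d)).1, (hx (Fin.last d)).2⟩
    · rintro ⟨h1, h2⟩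
      set x : Fin (d + 1) → ℝ :=
        Function.update (fun i => D.corner i + D.side / 2) (Fin.last d) r with hxdef
      have hmem : x ∈ D.toSet := by
        intro i
        rcases eq_or_ne i (Fin.last d) with rfl | hi
        · refine ⟨?_, ?_⟩ <;> simp [x, Function.update_self] <;> linarith
        · refine ⟨?_, ?_⟩ <;> simp [x, Function.update_of_ne hi] <;> linarith
      refine ⟨x, hmem, ?_⟩
      have hxu : 0 < x (Fin.last d) := (hsubD hmem).2
      rw [infDist_lastHyp_eq, abs_of_pos hxu]
      simp [x]
  have : cubeDistToHyp D = D.corner (Fin.last d) := by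
    rw [cubeDistToHyp, hR, csInf_Ioo (by linarith)]
  rw [this] at hdist
  exact hdist

/-- in dimension `d+1`, so that `d+1 ≥ 1`: counting the Whitney cubes
meeting a boundary cube `Q`. -/
theorem statement4 (d : ℕ) (Q : Cube (d + 1)) (m₀ : ℤ)
    (hQU : Q.toSet ⊆ Udom d) (hQl : Q.side ≤ 1)
    (hmeet : (Q.toSet ∩ lastUpper d).Nonempty)
    (hnot : ¬ Q.double.toSet ⊆ lastUpper d)
    (hlow : (2 : ℝ) ^ (-m₀ - 1) < Q.side) (hhigh : Q.side ≤ (2 : ℝ) ^ (-m₀)) (m : ℤ) :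
    (m < m₀ → {D ∈ WhitneyFam d m | (Q.toSet ∩ D.toSet).Nonempty}.ncard = 0) ∧
    (m₀ ≤ m → ({D ∈ WhitneyFam d m | (Q.toSet ∩ D.toSet).Nonempty}.ncard : ℝ) ≤
      ((2 : ℝ) ^ (d + 1) - 1) * (2 : ℝ) ^ ((m - m₀) * (d : ℤ))) := by
  have h2m : (0 : ℝ) < (2 : ℝ) ^ (-m) := by positivity
  have h2mp : (0 : ℝ) < (2 : ℝ) ^ m := by positivity
  have h2m0 : (0 : ℝ) < (2 : ℝ) ^ (-m₀) := by positivity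
  have h2mm : (2 : ℝ) ^ (-m) * (2 : ℝ) ^ m = 1 := by
    rw [← zpow_add₀ (two_ne_zero)]; simp
  constructor
  · -- part (a)
    intro hm
    have hempty : {D ∈ WhitneyFam d m | (Q.toSet ∩ D.toSet).Nonempty} = ∅ := by
      ext D
      simp only [Set.mem_setOf_eq, Set.mem_empty_iff_false, iff_false, not_and]
      intro hD hne
      obtain ⟨x, hxQ, hxD⟩ := hne
      have hc := whitney_corner_last hD
      have hx1 : (2 : ℝ) ^ (-m) < x (Fin.last d) := hc ▸ (hxD (Fin.last d)).1
      have hmono : (2 : ℝ) ^ (-m₀ + 1) ≤ (2 : ℝ) ^ (-m) :=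
        zpow_le_zpow_right₀ one_le_two (by omega)
      obtain ⟨y, hyD, hyU⟩ := Set.not_subset.1 hnot
      have hy0 : y (Fin.last d) ≤ 0 := le_of_not_gt hyU
      have h1 := (hyD (Fin.last d)).1
      have hclt : Q.corner (Fin.last d) < Q.side / 2 := by
        simp only [Cube.double] at h1; linarith
      have hx2 : x (Fin.last d) < Q.corner (Fin.last d) + Q.side := (hxQ _).2
      have h2 : (2 : ℝ) ^ (-m₀ + 1) = 2 * (2 : ℝ) ^ (-m₀) := by
        rw [zpow_add₀ (two_ne_zero), zpow_one]; ring
      linarith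
    rw [hempty]
    simp
  · -- part (b)
    intro hm
    classical
    set n := (m - m₀).toNat with hn
    have hmn : (m - m₀ : ℤ) = (n : ℤ) := (Int.toNat_of_nonneg (by omega)).symm
    set K : Fin (d + 1) → Finset ℤ := fun i =>
      if i = Fin.last d then {1}
      else Finset.Ioo ⌊Q.corner i * (2 : ℝ) ^ m - 1⌋ ⌈(Q.corner i + Q.side) * (2 : ℝ) ^ m⌉
      with hKdef
    set f : (Fin (d + 1) → ℤ) → Cube (d + 1) := fun k =>
      ⟨fun i => (k i : ℝ) * (2 : ℝ) ^ (-m), (2 : ℝ) ^ (-m), h2m⟩ with hfdef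
    have hsub : {D ∈ WhitneyFam d m | (Q.toSet ∩ D.toSet).Nonempty}
        ⊆ ↑((Fintype.piFinset K).image f) := by
      rintro D ⟨hD, x, hxQ, hxD⟩
      have hclD := whitney_corner_last hD
      obtain ⟨hside, hcor, hDsub, hdist⟩ := hD
      choose k hk using hcor
      have hklast : k (Fin.last d) = 1 := by
        have h := (hk (Fin.last d)).symm.trans hclD
        have h2 : (k (Fin.last d) : ℝ) * (2 : ℝ) ^ (-m) = 1 * (2 : ℝ) ^ (-m) := by
          rw [one_mul]; exact h
        have := mul_right_cancel₀ (ne_of_gt h2m) h2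
        exact_mod_cast this
      simp only [Finset.coe_image, Set.mem_image, Finset.mem_coe]
      refine ⟨k, ?_, ?_⟩
      · rw [Fintype.mem_piFinset]
        intro i
        rcases eq_or_ne i (Fin.last d) with rfl | hi
        · simp [K, hklast]
        · simp only [K, if_neg hi, Finset.mem_Ioo]
          have hx1 : Q.corner i < x i := (hxQ i).1
          have hx2 : x i < Q.corner i + Q.side := (hxQ i).2
          have hx3 : (k i : ℝ) * (2 : ℝ) ^ (-m) < x i := by rw [← hk i]; exact (hxD i).1
          have hx4 : x i < (k i : ℝ) * (2 : ℝ) ^ (-m) + (2 : ℝ) ^ (-m) := by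
            have h := (hxD i).2; rw [hk i, hside] at h; exact h
          constructor
          · rw [Int.floor_lt]
            have hlt : Q.corner i < ((k i : ℝ) + 1) * (2 : ℝ) ^ (-m) := by
              rw [add_mul, one_mul]; linarith
            have := mul_lt_mul_of_pos_right hlt h2mp
            rw [mul_assoc, h2mm, mul_one] at this
            push_cast
            linarith
          · rw [Int.lt_ceil]
            have hlt : (k i : ℝ) * (2 : ℝ) ^ (-m) < Q.corner i + Q.side := by linarith
            have := mul_lt_mul_of_pos_right hlt h2mp
            rw [mul_assoc, h2mm, mul_one] at this
            exact this
      · obtain ⟨Dc, Ds, Dpos⟩ := D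
        simp only [f, Cube.mk.injEq]
        exact ⟨(funext fun i => (hk i).symm), hside.symm⟩
    have h1 : {D ∈ WhitneyFam d m | (Q.toSet ∩ D.toSet).Nonempty}.ncard
        ≤ ((Fintype.piFinset K).image f).card := by
      have := Set.ncard_le_ncard hsub (Finset.finite_toSet _)
      rwa [Set.ncard_coe_finset] at this
    have h2 : ((Fintype.piFinset K).image f).card ≤ (Fintype.piFinset K).card :=
      Finset.card_image_le
    have hKcard : ∀ i : Fin (d + 1), i ≠ Fin.last d → (K i).card ≤ 2 ^ n + 1 := by
      intro i hi
      simp only [K, if_neg hi, Int.card_Ioo]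
      rw [Int.toNat_le]
      have hb : (⌈(Q.corner i + Q.side) * (2 : ℝ) ^ m⌉ : ℝ)
          < (Q.corner i + Q.side) * (2 : ℝ) ^ m + 1 := Int.ceil_lt_add_one _
      have ha : Q.corner i * (2 : ℝ) ^ m - 1 - 1
          < (⌊Q.corner i * (2 : ℝ) ^ m - 1⌋ : ℝ) := Int.sub_one_lt_floor _
      have hs2 : Q.side * (2 : ℝ) ^ m ≤ (2 : ℝ) ^ n := by
        have hle : Q.side * (2 : ℝ) ^ m ≤ (2 : ℝ) ^ (-m₀) * (2 : ℝ) ^ m :=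
          mul_le_mul_of_nonneg_right hhigh (le_of_lt h2mp)
        have heq : (2 : ℝ) ^ (-m₀) * (2 : ℝ) ^ m = (2 : ℝ) ^ (m - m₀ : ℤ) := by
          rw [← zpow_add₀ (two_ne_zero)]; ring_nf
        have heq2 : (2 : ℝ) ^ (m - m₀ : ℤ) = (2 : ℝ) ^ n := by
          rw [hmn, zpow_natCast]
        rw [heq, heq2] at hle
        exact hle
      have hZ : (⌈(Q.corner i + Q.side) * (2 : ℝ) ^ m⌉
          - ⌊Q.corner i * (2 : ℝ) ^ m - 1⌋ - 1 : ℤ) < (2 ^ n + 1 : ℕ) + 1 := by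
        have hR : ((⌈(Q.corner i + Q.side) * (2 : ℝ) ^ m⌉
            - ⌊Q.corner i * (2 : ℝ) ^ m - 1⌋ - 1 : ℤ) : ℝ) < ((2 ^ n + 1 : ℕ) : ℝ) + 1 := by
          push_cast
          ring_nf
          ring_nf at hb ha hs2
          linarith
        exact_mod_cast hR
      omega
    have h3 : (Fintype.piFinset K).card ≤ (2 ^ n + 1) ^ d := by
      rw [Fintype.card_piFinset]
      have hlastK : (K (Fin.last d)).card = 1 := by simp [K]
      rw [Fin.prod_univ_castSucc, hlastK, mul_one]
      calc ∏ i : Fin d, (K i.castSucc).card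
          ≤ ∏ _i : Fin d, (2 ^ n + 1) :=
            Finset.prod_le_prod' fun i _ => hKcard _ (Fin.castSucc_lt_last i).ne
        _ = (2 ^ n + 1) ^ d := by
            rw [Finset.prod_const, Finset.card_univ, Fintype.card_fin]
    have hone : (1 : ℝ) ≤ (2 : ℝ) ^ n := one_le_pow₀ one_le_two
    have honed : (1 : ℝ) ≤ (2 : ℝ) ^ d := one_le_pow₀ one_le_two
    calc ({D ∈ WhitneyFam d m | (Q.toSet ∩ D.toSet).Nonempty}.ncard : ℝ)
        ≤ (((2 ^ n + 1) ^ d : ℕ) : ℝ) := by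
          exact_mod_cast le_trans (le_trans h1 h2) h3
      _ = ((2 : ℝ) ^ n + 1) ^ d := by push_cast; ring
      _ ≤ (2 * (2 : ℝ) ^ n) ^ d := by
          apply pow_le_pow_left₀ (by positivity)
          linarith
      _ = 2 ^ d * ((2 : ℝ) ^ n) ^ d := mul_pow _ _ _
      _ ≤ ((2 : ℝ) ^ (d + 1) - 1) * ((2 : ℝ) ^ n) ^ d := by
          apply mul_le_mul_of_nonneg_right _ (by positivity)
          rw [pow_succ]
          linarith
      _ = ((2 : ℝ) ^ (d + 1) - 1) * (2 : ℝ) ^ ((m - m₀) * (d : ℤ)) := by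
          rw [zpow_mul, hmn, zpow_natCast, zpow_natCast]
end
end
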